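/- arXiv:2301.12628 — 2 statements merged into one kernel-verified Lean document; each statement's English description precedes it below -/
import Mathlib

section
/- Let u, v > 0 be real numbers and set R₁ = u²·v² − 4·u²·v − 4·u·v² + 18·u·v − 27. If R₁ = 0 and (u, v) ≠ (3, 3), then the set of positive equilibria of Kopel's duopoly model, i.e. the set { (x, y) ∈ ℝ² : x > 0, y > 0, x = u·y·(1−y), y = v·x·(1−x) }, has exactly two elements. -/
/-!
Eliminating `x = u y (1 - y)` from `y = v x (1 - x)` and cancelling `y > 0` leaves
`u v (1 - y) (1 - u y (1 - y)) = 1`. When `u v > 1` every real root of this cubic lies in `(0, 1)`,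
so positive equilibria correspond bijectively to its real roots. The discriminant of the cubic
is `u⁴ v² R₁`; when it vanishes the cubic has a simple root and a double root, and these
coincide only at `(u, v) = (3, 3)`, where the root is triple.
-/

namespace Kopel

def R₁ (u v : ℝ) : ℝ := u ^ 2 * v ^ 2 - 4 * u ^ 2 * v - 4 * u * v ^ 2 + 18 * u * v - 27

def positiveEquilibria (u v : ℝ) : Set (ℝ × ℝ) :=
  {p | 0 < p.1 ∧ 0 < p.2 ∧ p.1 = u * p.2 * (1 - p.2) ∧ p.2 = v * p.1 * (1 - p.1)}

/-- `v x (1 - x) = y * reactionRatio u v y` for `x = u y (1 - y)`. -/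
def reactionRatio (u v y : ℝ) : ℝ := u * v * (1 - y) * (1 - u * y * (1 - y))

noncomputable def simpleRoot (u v : ℝ) : ℝ := (u * v - 9) / (u * v * (u - 3))

noncomputable def doubleRoot (u v : ℝ) : ℝ :=
  (2 * u ^ 2 * v - 7 * u * v + 9) / (2 * u * v * (u - 3))

variable {u v : ℝ}

theorem R₁_comm (u v : ℝ) : R₁ u v = R₁ v u := by
  unfold R₁; ring

/-- `R₁` is a quadratic in `v` of discriminant `16 u (u - 3) ^ 3`. -/
theorem three_le_of_R₁_eq_zero (hu : 0 < u) (hR : R₁ u v = 0) : 3 ≤ u := by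
  have hsq : 4 * u * (u - 3) ^ 3 = (u * (u - 4) * v + u * (9 - 2 * u)) ^ 2 := by
    unfold R₁ at hR; linear_combination -(u * (u - 4)) * hR
  have : 0 ≤ (u - 3) ^ 3 := by
    have := sq_nonneg (u * (u - 4) * v + u * (9 - 2 * u))
    rw [← hsq] at this
    exact nonneg_of_mul_nonneg_right (by linarith) (by positivity : (0 : ℝ) < 4 * u)
  by_contra! h
  have : (u - 3) ^ 3 < 0 := Odd.pow_neg (by decide) (by linarith)
  linarith

theorem three_lt_of_R₁_eq_zero (hu : 0 < u) (hR : R₁ u v = 0) (hne : (u, v) ≠ (3, 3)) :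
    3 < u := by
  refine (three_le_of_R₁_eq_zero hu hR).lt_of_ne fun h => hne ?_
  subst h
  have : (v - 3) ^ 2 = 0 := by unfold R₁ at hR; linear_combination -hR / 3
  rw [pow_eq_zero_iff two_ne_zero, sub_eq_zero] at this
  rw [this]

theorem mem_Ioo_of_reactionRatio_eq_one (hu : 0 ≤ u) (huv : 1 < u * v) {y : ℝ}
    (h : reactionRatio u v y = 1) : y ∈ Set.Ioo 0 1 := by
  unfold reactionRatio at h
  constructor
  · by_contra! hy
    have : 1 ≤ (1 - y) * (1 - u * y * (1 - y)) :=
      one_le_mul_of_one_le_of_one_le (by linarith) (by nlinarith [mul_nonneg hu (neg_nonneg.2 hy)])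
    nlinarith
  · by_contra! hy
    have : (1 - y) * (1 - u * y * (1 - y)) ≤ 0 :=
      mul_nonpos_of_nonpos_of_nonneg (by linarith) (by nlinarith [mul_nonneg hu (sub_nonneg.2 hy)])
    nlinarith

theorem mem_positiveEquilibria_iff (hu : 0 < u) (huv : 1 < u * v) {x y : ℝ} :
    (x, y) ∈ positiveEquilibria u v ↔ x = u * y * (1 - y) ∧ reactionRatio u v y = 1 := by
  simp only [positiveEquilibria, Set.mem_ofPred_eq]
  constructor
  · rintro ⟨-, hy, rfl, hyx⟩
    refine ⟨rfl, mul_left_cancel₀ hy.ne' ?_⟩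
    unfold reactionRatio
    linear_combination -hyx
  · rintro ⟨rfl, hr⟩
    obtain ⟨hy0, hy1⟩ := mem_Ioo_of_reactionRatio_eq_one hu.le huv hr
    refine ⟨mul_pos (mul_pos hu hy0) (sub_pos.2 hy1), hy0, rfl, ?_⟩
    unfold reactionRatio at hr
    linear_combination -y * hr

theorem positiveEquilibria_eq_image (hu : 0 < u) (huv : 1 < u * v) :
    positiveEquilibria u v =
      (fun y => (u * y * (1 - y), y)) '' {y | reactionRatio u v y = 1} := by
  ext ⟨x, y⟩
  rw [mem_positiveEquilibria_iff hu huv]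
  constructor
  · rintro ⟨rfl, hr⟩
    exact ⟨y, hr, rfl⟩
  · rintro ⟨y, hr, h⟩
    obtain ⟨rfl, rfl⟩ := Prod.mk.inj h
    exact ⟨rfl, hr⟩

theorem one_sub_reactionRatio_eq (hu : 3 < u) (hv : v ≠ 0) (hR : R₁ u v = 0) (y : ℝ) :
    1 - reactionRatio u v y = u ^ 2 * v * (y - simpleRoot u v) * (y - doubleRoot u v) ^ 2 := by
  have hD : u * v * (u - 3) ≠ 0 := mul_ne_zero (mul_ne_zero (by linarith) hv) (by linarith)
  have h : 1 - reactionRatio u v y = u ^ 2 * v * (u * v * (u - 3) * y - (u * v - 9)) *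
      (2 * u * v * (u - 3) * y - (2 * u ^ 2 * v - 7 * u * v + 9)) ^ 2 /
        (4 * (u * v * (u - 3)) ^ 3) := by
    rw [eq_div_iff (by positivity)]
    unfold reactionRatio
    unfold R₁ at hR
    linear_combination
      -u ^ 2 * v * (9 * u ^ 2 * v * y - 27 * u * v * y - 8 * u ^ 2 * v + 27 * u * v - 27) * hR
  have hu3 : u - 3 ≠ 0 := by linarith
  rw [h, simpleRoot, doubleRoot]
  field_simp
  ring

theorem setOf_reactionRatio_eq_one (hu : 3 < u) (hv : v ≠ 0) (hR : R₁ u v = 0) :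
    {y | reactionRatio u v y = 1} = {simpleRoot u v, doubleRoot u v} := by
  ext y
  have hu0 : u ≠ 0 := by linarith
  rw [Set.mem_ofPred_eq, ← sub_eq_zero, ← neg_eq_zero, neg_sub,
    one_sub_reactionRatio_eq hu hv hR]
  simp [hu0, hv, sub_eq_zero]

theorem simpleRoot_ne_doubleRoot (hu : 3 < u) (hv : v ≠ 0) (hR : R₁ u v = 0) :
    simpleRoot u v ≠ doubleRoot u v := by
  have hD : u * v * (u - 3) ≠ 0 := mul_ne_zero (mul_ne_zero (by linarith) hv) (by linarith)
  have hq : 2 * u ^ 2 * v - 9 * u * v + 27 ≠ 0 := by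
    intro h
    have : 108 * u * (u - 3) ^ 3 = 0 := by
      unfold R₁ at hR
      linear_combination (u * (2 * u - 9)) ^ 2 * hR
        - (2 * u ^ 4 * v - 8 * u ^ 4 - 17 * u ^ 3 * v + 72 * u ^ 3 + 36 * u ^ 2 * v
            - 189 * u ^ 2 + 108 * u) * h
    have : 0 < 108 * u * (u - 3) ^ 3 := by
      have : 0 < u - 3 := by linarith
      positivity
    linarith
  intro h
  rw [simpleRoot, doubleRoot, div_eq_div_iff hD (by simpa [mul_assoc] using hD)] at h
  exact hq (mul_right_cancel₀ hD (by linear_combination -h))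

end Kopel

open Kopel in
/-- If R₁ = 0 and (u,v) ≠ (3,3), Kopel's model has exactly two positive equilibria. -/
theorem kopel_two_positive_equilibria
    (u v : ℝ) (hu : 0 < u) (hv : 0 < v)
    (hR1 : u ^ 2 * v ^ 2 - 4 * u ^ 2 * v - 4 * u * v ^ 2 + 18 * u * v - 27 = 0)
    (hne : (u, v) ≠ ((3 : ℝ), (3 : ℝ))) :
    {p : ℝ × ℝ | 0 < p.1 ∧ 0 < p.2 ∧
      p.1 = u * p.2 * (1 - p.2) ∧ p.2 = v * p.1 * (1 - p.1)}.encard = 2 := by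
  have hu3 : 3 < u := three_lt_of_R₁_eq_zero hu hR1 hne
  have hv3 : 3 ≤ v := three_le_of_R₁_eq_zero hv (by rw [R₁_comm]; exact hR1)
  have huv : 1 < u * v := by nlinarith
  change (positiveEquilibria u v).encard = 2
  rw [positiveEquilibria_eq_image hu huv,
    Function.Injective.encard_image (fun a b h => congrArg Prod.snd h),
    setOf_reactionRatio_eq_one hu3 hv.ne' hR1,
    Set.encard_pair (simpleRoot_ne_doubleRoot hu3 hv.ne' hR1)]
end

section
/- Let 0 < a ≤ 1 and u, v > 0 be real numbers, set R₁ = u²·v² − 4·u²·v − 4·u·v² + 18·u·v − 27 and H₃ = a³·u³·v³ − 4·a³·u³·v² − 4·a³·u²·v³ + 17·a³·u²·v² + 4·a³·u²·v + 4·a³·u·v² − 2·a²·u²·v² − 45·a³·u·v + 8·a²·u²·v + 8·a²·u·v² − 36·a²·u·v + 27·a³ − 4·a·u·v + 54·a² + 36·a + 8. If either (u·v > 1, R₁ < 0 and H₃ > 0) or (u·v > 1, R₁ > 0 and H₃ < 0), then the set of stable positive equilibria of Kopel's model with homogeneous adaptive expectations (b = a), i.e. the set of pairs (x, y) ∈ ℝ²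 with x > 0, y > 0, x = u·y·(1−y), y = v·x·(1−x), such that every complex root λ of λ² − (2 − 2a)·λ + ((1−a)² − u·v·a²·(1−2x)(1−2y)) satisfies |λ| < 1, has exactly one element. -/
/-!
Eliminating `y`, the positive equilibria are the points `(x, v x (1 - x))` where `x` is a root
of a cubic `g`, and when `u v > 1` every real root of `g` lies in `(0, 1)`. By Jury's criterion
such an equilibrium is stable iff `g'(x) < 0` and `P(x) = 2 - a (1 - K) > 0`, where
`K = u v (1 - 2x)(1 - 2y)`. The discriminant of `g` is `u² v⁴ R₁`, and the product of `P` over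
the three roots of `g` is `H₃`.

If `R₁ < 0`, `g` has one real root and two complex conjugate ones; there `g' < 0`, and since
`P` has positive product over the conjugate pair, `H₃ > 0` forces `P > 0` at the real root.
If `R₁ > 0`, `g` has three real roots; `g' < 0` at the outer two and `g' > 0` at the middle one,
where `P > 0` automatically, so `H₃ < 0` makes `P` positive at exactly one of the outer roots.
-/

namespace Kopel

/-- Substituting `y = v x (1 - x)` into `x = u y (1 - y)` and dividing by `x`. -/
def cubic (u v x : ℝ) : ℝ := u * v * (1 - x) * (1 - v * x * (1 - x)) - 1

/-- `-(u v)⁻¹` times the derivative of `cubic u v`. -/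
def slope (v x : ℝ) : ℝ := 3 * v * x ^ 2 - 4 * v * x + v + 1

/-- At an equilibrium this is `2 - a (1 - K)`; its sign decides whether an eigenvalue has
crossed `-1`. -/
def flipMargin (a u v x : ℝ) : ℝ := 2 - a * u * v * x * slope v x

def quotient (v x X : ℝ) : ℝ := v * X ^ 2 + v * (x - 2) * X + (v + 1 + v * x ^ 2 - 2 * v * x)

/-- `v⁻¹` times the discriminant of `quotient v x`. -/
def quotientDisc (v x : ℝ) : ℝ := -3 * v * x ^ 2 + 4 * v * x - 4

/-- The discriminant of `cubic u v`, divided by `u² v⁴`. -/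
def R1 (u v : ℝ) : ℝ := u ^ 2 * v ^ 2 - 4 * u ^ 2 * v - 4 * u * v ^ 2 + 18 * u * v - 27

/-- The product of `flipMargin a u v` over the three complex roots of `cubic u v`. -/
def H3 (a u v : ℝ) : ℝ :=
  a ^ 3 * u ^ 3 * v ^ 3 - 4 * a ^ 3 * u ^ 3 * v ^ 2 - 4 * a ^ 3 * u ^ 2 * v ^ 3 +
    17 * a ^ 3 * u ^ 2 * v ^ 2 + 4 * a ^ 3 * u ^ 2 * v + 4 * a ^ 3 * u * v ^ 2 -
    2 * a ^ 2 * u ^ 2 * v ^ 2 - 45 * a ^ 3 * u * v + 8 * a ^ 2 * u ^ 2 * v +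
    8 * a ^ 2 * u * v ^ 2 - 36 * a ^ 2 * u * v + 27 * a ^ 3 - 4 * a * u * v +
    54 * a ^ 2 + 36 * a + 8

/-- `v³` times the product of `flipMargin a u v` over the two roots of `quotient v x`: when they
are complex conjugate (`quotientDisc v x < 0`) this is `v³` times a squared modulus. -/
def flipNorm (a u v x : ℝ) : ℝ :=
  v * (2 * v + a * u * v ^ 2 * (4 - 4 * x - 4 * v * x + 7 * v * x ^ 2 - 3 * v * x ^ 3)) ^ 2 -
    quotientDisc v x * (a * u * v ^ 2 * (1 - v + v * x)) ^ 2

def IsStableRoot (a u v x : ℝ) : Prop :=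
  0 < x ∧ cubic u v x = 0 ∧ 0 < slope v x ∧ 0 < flipMargin a u v x

theorem forall_norm_lt_one_of_sub_sq_eq_iff (c s : ℂ) :
    (∀ z : ℂ, (z - c) ^ 2 = s ^ 2 → ‖z‖ < 1) ↔ ‖c + s‖ < 1 ∧ ‖c - s‖ < 1 := by
  refine ⟨fun h => ⟨h _ (by ring), h _ (by ring)⟩, ?_⟩
  rintro ⟨hadd, hsub⟩ z hz
  rcases sq_eq_sq_iff_eq_or_eq_neg.1 hz with hz | hz
  · rwa [show z = c + s by linear_combination hz]
  · rwa [show z = c - s by linear_combination hz]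

/-- Jury's criterion for `(l - (1 - a))² - a² K`: the two conditions say that no eigenvalue has
crossed `1` or `-1`. -/
theorem forall_root_norm_lt_one_iff {a : ℝ} (ha : 0 < a) (ha1 : a ≤ 1) (K : ℝ) :
    (∀ l : ℂ, l ^ 2 - ((2 - 2 * a : ℝ) : ℂ) * l + (((1 - a) ^ 2 - a ^ 2 * K : ℝ) : ℂ) = 0 →
      ‖l‖ < 1) ↔ 0 < 1 - K ∧ a * (1 - K) < 2 := by
  have hpoly : ∀ l : ℂ,
      l ^ 2 - ((2 - 2 * a : ℝ) : ℂ) * l + (((1 - a) ^ 2 - a ^ 2 * K : ℝ) : ℂ) = 0 ↔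
        (l - ((1 - a : ℝ) : ℂ)) ^ 2 = ((a ^ 2 * K : ℝ) : ℂ) := fun l => by
    push_cast
    constructor <;> intro h <;> linear_combination h
  simp only [hpoly]
  rcases le_or_gt 0 K with hK | hK
  · obtain ⟨t, ht, rfl⟩ : ∃ t : ℝ, 0 ≤ t ∧ K = t ^ 2 :=
      ⟨√K, Real.sqrt_nonneg K, (Real.sq_sqrt hK).symm⟩
    rw [show ((a ^ 2 * t ^ 2 : ℝ) : ℂ) = ((a * t : ℝ) : ℂ) ^ 2 by push_cast; ring,
      forall_norm_lt_one_of_sub_sq_eq_iff, ← Complex.ofReal_add, ← Complex.ofReal_sub,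
      Complex.norm_real, Complex.norm_real, Real.norm_eq_abs, Real.norm_eq_abs, abs_lt, abs_lt]
    constructor
    · rintro ⟨⟨-, h⟩, -⟩
      have : t < 1 := by nlinarith
      constructor <;> nlinarith
    · rintro ⟨h, -⟩
      have : t < 1 := by nlinarith
      refine ⟨⟨?_, ?_⟩, ?_, ?_⟩ <;> nlinarith
  · obtain ⟨t, rfl⟩ : ∃ t : ℝ, K = -t ^ 2 :=
      ⟨√(-K), by rw [Real.sq_sqrt (neg_nonneg.2 hK.le)]; ring⟩
    rw [show ((a ^ 2 * -t ^ 2 : ℝ) : ℂ) = (((a * t : ℝ) : ℂ) * Complex.I) ^ 2 by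
        push_cast; rw [mul_pow, Complex.I_sq]; ring,
      forall_norm_lt_one_of_sub_sq_eq_iff,
      show ((1 - a : ℝ) : ℂ) - ((a * t : ℝ) : ℂ) * Complex.I
        = ((1 - a : ℝ) : ℂ) + ((-(a * t) : ℝ) : ℂ) * Complex.I by push_cast; ring,
      ← sq_lt_one_iff₀ (norm_nonneg _), ← sq_lt_one_iff₀ (norm_nonneg _), Complex.sq_norm,
      Complex.sq_norm, Complex.normSq_add_mul_I, Complex.normSq_add_mul_I]
    constructor
    · rintro ⟨h, -⟩
      constructor <;> nlinarith
    · rintro ⟨-, h⟩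
      constructor <;> nlinarith

theorem slope_eq_quotient (v x : ℝ) : slope v x = quotient v x x := by
  unfold slope quotient; ring

theorem four_mul_quotient (v x X : ℝ) :
    4 * v * quotient v x X = (2 * v * X + v * (x - 2)) ^ 2 - v * quotientDisc v x := by
  unfold quotient quotientDisc; ring

variable {a u v x : ℝ}

theorem one_sub_eq_mul_slope (hx : cubic u v x = 0) :
    1 - u * v * (1 - 2 * x) * (1 - 2 * (v * x * (1 - x))) = u * v * x * slope v x := by
  unfold cubic at hx
  unfold slope
  linear_combination -hx

theorem mul_cubic_eq_mul_quotient (hx : cubic u v x = 0) (X : ℝ) :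
    v * cubic u v X = -(u * v ^ 2 * (X - x) * quotient v x X) := by
  unfold cubic at hx ⊢
  unfold quotient
  linear_combination v * hx

theorem quotient_eq_mul {s : ℝ} (hs : 4 * v * s ^ 2 = quotientDisc v x) (X : ℝ) :
    quotient v x X = v * (X - ((2 - x) / 2 - s)) * (X - ((2 - x) / 2 + s)) := by
  unfold quotientDisc at hs
  unfold quotient
  linear_combination (1 / 4) * hs

theorem R1_eq_quotientDisc_mul_slope_sq (hx : cubic u v x = 0) :
    R1 u v = u ^ 2 * v * quotientDisc v x * slope v x ^ 2 := by
  unfold cubic at hx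
  unfold quotientDisc slope R1
  linear_combination (-27*u*v^2*x^3 + 54*u*v^2*x^2 - 27*u*v^2*x + 4*u*v^2 - 27*u*v*x + 9*u*v
    + 27) * hx

theorem flipMargin_mul_flipNorm (hx : cubic u v x = 0) :
    flipMargin a u v x * flipNorm a u v x = v ^ 3 * H3 a u v := by
  unfold cubic at hx
  unfold flipMargin slope flipNorm quotientDisc H3
  linear_combination (27*a^3*u^2*v^7*x^6 - 108*a^3*u^2*v^7*x^5 + 162*a^3*u^2*v^7*x^4 -
    112*a^3*u^2*v^7*x^3 + 35*a^3*u^2*v^7*x^2 - 4*a^3*u^2*v^7*x + 54*a^3*u^2*v^6*x^4 -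
    117*a^3*u^2*v^6*x^3 + 72*a^3*u^2*v^6*x^2 - 13*a^3*u^2*v^6*x + 27*a^3*u^2*v^5*x^2 -
    9*a^3*u^2*v^5*x - a^3*u^2*v^5 + 4*a^3*u^2*v^4 - 27*a^3*u*v^5*x^3 + 54*a^3*u*v^5*x^2 -
    27*a^3*u*v^5*x + 4*a^3*u*v^5 - 27*a^3*u*v^4*x - 18*a^3*u*v^4 + 27*a^3*v^3 - 54*a^2*u*v^5*x^3
    + 108*a^2*u*v^5*x^2 - 54*a^2*u*v^5*x + 8*a^2*u*v^5 - 54*a^2*u*v^4*x + 18*a^2*u*v^4 +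
    54*a^2*v^3 + 36*a*v^3) * hx

theorem flipNorm_eq_mul_flipMargin {s : ℝ} (hs : 4 * v * s ^ 2 = quotientDisc v x) :
    flipNorm a u v x =
      v ^ 3 * (flipMargin a u v ((2 - x) / 2 - s) * flipMargin a u v ((2 - x) / 2 + s)) := by
  unfold quotientDisc at hs
  unfold flipMargin slope flipNorm quotientDisc
  linear_combination (-1 / 64) * ((-189)*a^2*u^2*v^6*x^4 + 624*a^2*u^2*v^6*x^3
    + 216*a^2*u^2*v^6*x^2*s^2
    + (-740)*a^2*u^2*v^6*x^2 + (-384)*a^2*u^2*v^6*x*s^2 + 368*a^2*u^2*v^6*x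
    + (-144)*a^2*u^2*v^6*s^4 + 208*a^2*u^2*v^6*s^2 + (-64)*a^2*u^2*v^6 + (-252)*a^2*u^2*v^5*x^2
    + 368*a^2*u^2*v^5*x + 48*a^2*u^2*v^5*s^2 + (-112)*a^2*u^2*v^5 + (-64)*a^2*u^2*v^4
    + 288*a*u*v^4*x + (-320)*a*u*v^4) * hs

theorem exists_cubic_eq_zero (huv : 1 < u * v) : ∃ x ∈ Set.Ioo (0 : ℝ) 1, cubic u v x = 0 := by
  have hcont : ContinuousOn (cubic u v) (Set.Icc 0 1) := by unfold cubic; fun_prop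
  have hsign : (0 : ℝ) ∈ Set.Ioo (cubic u v 1) (cubic u v 0) := by
    simp only [cubic, Set.mem_Ioo]; constructor <;> linarith
  exact intermediate_value_Ioo' zero_le_one hcont hsign

theorem pos_of_cubic_eq_zero (hv : 0 < v) (huv : 1 < u * v) (hx : cubic u v x = 0) : 0 < x := by
  by_contra! hx0
  have h1 : 1 ≤ 1 - x := by linarith
  have h2 : 1 ≤ 1 - v * x * (1 - x) := by nlinarith [mul_nonpos_of_nonpos_of_nonneg hx0 hv.le]
  unfold cubic at hx
  nlinarith [mul_le_mul h1 h2 zero_le_one (by linarith)]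

theorem lt_one_of_cubic_eq_zero (hu : 0 < u) (hv : 0 < v) (hx : cubic u v x = 0) : x < 1 := by
  by_contra! hx1
  have h : u * v * (1 - x) * (1 - v * x * (1 - x)) ≤ 0 :=
    mul_nonpos_of_nonpos_of_nonneg (mul_nonpos_of_nonneg_of_nonpos (by positivity) (by linarith))
      (by nlinarith [mul_nonneg hv.le (by linarith : (0 : ℝ) ≤ x - 1)])
  unfold cubic at hx
  linarith

theorem vieta_of_factor (hu : 0 < u) (hv : 0 < v) {p q r : ℝ}
    (hfac : ∀ X, cubic u v X = -(u * v ^ 2) * ((X - p) * (X - q) * (X - r))) :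
    p + q + r = 2 ∧ v * (p * q + p * r + q * r) = 1 + v := by
  have h₀ := hfac 0
  have h₁ := hfac 1
  have hm := hfac (-1)
  unfold cubic at h₀ h₁ hm
  have huv : u * v ≠ 0 := by positivity
  constructor
  · apply mul_left_cancel₀ (mul_ne_zero huv hv.ne')
    linear_combination h₀ - (1 / 2) * h₁ - (1 / 2) * hm
  · apply mul_left_cancel₀ huv
    linear_combination (1 / 2) * h₁ - (1 / 2) * hm

theorem slope_eq_of_vieta {p q r : ℝ} (he₁ : p + q + r = 2)
    (he₂ : v * (p * q + p * r + q * r) = 1 + v) : slope v p = v * (p - q) * (p - r) := by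
  unfold slope
  linear_combination 2 * v * p * he₁ - he₂

theorem flipMargin_mul_mul_of_vieta (hv : v ≠ 0) {p q r : ℝ} (hp : cubic u v p = 0)
    (he₁ : p + q + r = 2) (he₂ : v * (p * q + p * r + q * r) = 1 + v) :
    flipMargin a u v p * flipMargin a u v q * flipMargin a u v r = H3 a u v := by
  have hs : 4 * v * ((r - q) / 2) ^ 2 = quotientDisc v p := by
    unfold quotientDisc
    linear_combination v * (2 + 3 * p + q + r) * he₁ - 4 * he₂
  have hN := flipNorm_eq_mul_flipMargin (a := a) (u := u) hs
  rw [show (2 - p) / 2 - (r - q) / 2 = q by linarith,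
    show (2 - p) / 2 + (r - q) / 2 = r by linarith] at hN
  apply mul_left_cancel₀ (pow_ne_zero 3 hv)
  linear_combination flipMargin_mul_flipNorm (a := a) hp - flipMargin a u v p * hN

theorem stableEquilibrium_iff (ha : 0 < a) (ha1 : a ≤ 1) (hu : 0 < u) (hv : 0 < v) {y : ℝ} :
    (0 < x ∧ 0 < y ∧ x = u * y * (1 - y) ∧ y = v * x * (1 - x) ∧
      ∀ l : ℂ, l ^ 2 - ((2 - 2 * a : ℝ) : ℂ) * l +
        (((1 - a) ^ 2 - u * v * a ^ 2 * (1 - 2 * x) * (1 - 2 * y) : ℝ) : ℂ) = 0 → ‖l‖ < 1) ↔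
    IsStableRoot a u v x ∧ y = v * x * (1 - x) := by
  have hfixed : x = u * (v * x * (1 - x)) * (1 - v * x * (1 - x)) ↔ x * cubic u v x = 0 := by
    unfold cubic
    constructor <;> intro h <;> linear_combination -h
  have hK : (1 - a) ^ 2 - u * v * a ^ 2 * (1 - 2 * x) * (1 - 2 * (v * x * (1 - x)))
      = (1 - a) ^ 2 - a ^ 2 * (u * v * (1 - 2 * x) * (1 - 2 * (v * x * (1 - x)))) := by ring
  constructor
  · rintro ⟨hx, -, hxy, rfl, hstable⟩
    have hroot : cubic u v x = 0 := (mul_eq_zero.1 (hfixed.1 hxy)).resolve_left hx.ne'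
    rw [hK, forall_root_norm_lt_one_iff ha ha1, one_sub_eq_mul_slope hroot] at hstable
    have huvx : 0 < u * v * x := by positivity
    refine ⟨⟨hx, hroot, pos_of_mul_pos_right hstable.1 huvx.le, ?_⟩, rfl⟩
    unfold flipMargin
    linarith [hstable.2]
  · rintro ⟨⟨hx, hroot, hslope, hflip⟩, rfl⟩
    have hx1 := lt_one_of_cubic_eq_zero hu hv hroot
    refine ⟨hx, by nlinarith [mul_pos hv hx], hfixed.2 (by rw [hroot, mul_zero]), rfl, ?_⟩
    rw [hK, forall_root_norm_lt_one_iff ha ha1, one_sub_eq_mul_slope hroot]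
    unfold flipMargin at hflip
    exact ⟨by positivity, by linarith⟩

theorem existsUnique_isStableRoot_of_R1_neg (hu : 0 < u) (hv : 0 < v) (huv : 1 < u * v)
    (hR : R1 u v < 0) (hH : 0 < H3 a u v) : ∃! x, IsStableRoot a u v x := by
  obtain ⟨x, ⟨hx0, -⟩, hx⟩ := exists_cubic_eq_zero huv
  rw [R1_eq_quotientDisc_mul_slope_sq hx] at hR
  have hdisc : quotientDisc v x < 0 :=
    neg_of_mul_neg_right (neg_of_mul_neg_left hR (sq_nonneg _)) (by positivity)
  have hquot : ∀ X, 0 < quotient v x X := fun X => by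
    nlinarith [four_mul_quotient v x X, sq_nonneg (2 * v * X + v * (x - 2)),
      mul_neg_of_pos_of_neg hv hdisc]
  have hflip : 0 < flipMargin a u v x := by
    have hN : 0 ≤ flipNorm a u v x := by
      unfold flipNorm
      rw [sub_eq_add_neg, ← neg_mul]
      exact add_nonneg (by positivity) (mul_nonneg (by linarith) (sq_nonneg _))
    refine pos_of_mul_pos_left ?_ hN
    rw [flipMargin_mul_flipNorm hx]
    positivity
  refine ⟨x, ⟨hx0, hx, slope_eq_quotient v x ▸ hquot x, hflip⟩, ?_⟩
  rintro y ⟨-, hy, -, -⟩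
  have hfac := mul_cubic_eq_mul_quotient hx y
  rw [hy, mul_zero, zero_eq_neg] at hfac
  have hyx := (mul_eq_zero.1 hfac).resolve_right (hquot y).ne'
  exact sub_eq_zero.1 ((mul_eq_zero.1 hyx).resolve_left (by positivity))

theorem existsUnique_isStableRoot_of_factor (ha : 0 < a) (hu : 0 < u) (hv : 0 < v)
    (huv : 1 < u * v) (hH : H3 a u v < 0) {r₁ r₂ r₃ : ℝ} (h₁₂ : r₁ < r₂) (h₂₃ : r₂ < r₃)
    (hfac : ∀ X, cubic u v X = -(u * v ^ 2) * ((X - r₁) * (X - r₂) * (X - r₃))) :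
    ∃! x, IsStableRoot a u v x := by
  obtain ⟨he₁, he₂⟩ := vieta_of_factor hu hv hfac
  have hroot : ∀ X, cubic u v X = 0 ↔ X = r₁ ∨ X = r₂ ∨ X = r₃ := fun X => by
    simp only [hfac, mul_eq_zero, neg_eq_zero, sub_eq_zero, hu.ne', hv.ne', pow_eq_zero_iff,
      ne_eq, OfNat.ofNat_ne_zero, not_false_eq_true, false_or, or_assoc]
  have hroot₁ := (hroot r₁).2 (by simp)
  have hroot₂ := (hroot r₂).2 (by simp)
  have hroot₃ := (hroot r₃).2 (by simp)
  have hslope₁ : 0 < slope v r₁ := by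
    rw [slope_eq_of_vieta he₁ he₂]
    exact mul_pos_of_neg_of_neg (mul_neg_of_pos_of_neg hv (by linarith)) (by linarith)
  have hslope₂ : slope v r₂ < 0 := by
    rw [slope_eq_of_vieta (q := r₁) (r := r₃) (by linarith) (by linarith)]
    exact mul_neg_of_pos_of_neg (mul_pos hv (by linarith)) (by linarith)
  have hslope₃ : 0 < slope v r₃ := by
    rw [slope_eq_of_vieta (q := r₁) (r := r₂) (by linarith) (by linarith)]
    exact mul_pos (mul_pos hv (by linarith)) (by linarith)
  have hflip₂ : 0 < flipMargin a u v r₂ := by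
    unfold flipMargin
    nlinarith [mul_pos (mul_pos (mul_pos ha hu) hv) (pos_of_cubic_eq_zero hv huv hroot₂)]
  have hflip₁₃ : flipMargin a u v r₁ * flipMargin a u v r₃ < 0 := by
    have := flipMargin_mul_mul_of_vieta (a := a) hv.ne' hroot₁ he₁ he₂
    nlinarith
  rcases lt_or_gt_of_ne (left_ne_zero_of_mul hflip₁₃.ne) with hflip₁ | hflip₁
  · have hflip₃ : 0 < flipMargin a u v r₃ := by nlinarith
    refine ⟨r₃, ⟨pos_of_cubic_eq_zero hv huv hroot₃, hroot₃, hslope₃, hflip₃⟩, ?_⟩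
    rintro y ⟨-, hy, hys, hyf⟩
    rcases (hroot y).1 hy with rfl | rfl | rfl <;> linarith
  · have hflip₃ : flipMargin a u v r₃ < 0 := by nlinarith
    refine ⟨r₁, ⟨pos_of_cubic_eq_zero hv huv hroot₁, hroot₁, hslope₁, hflip₁⟩, ?_⟩
    rintro y ⟨-, hy, hys, hyf⟩
    rcases (hroot y).1 hy with rfl | rfl | rfl <;> linarith

theorem existsUnique_isStableRoot_of_R1_pos (ha : 0 < a) (hu : 0 < u) (hv : 0 < v)
    (huv : 1 < u * v) (hR : 0 < R1 u v) (hH : H3 a u v < 0) : ∃! x, IsStableRoot a u v x := by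
  obtain ⟨x, -, hx⟩ := exists_cubic_eq_zero huv
  rw [R1_eq_quotientDisc_mul_slope_sq hx] at hR
  have hdisc : 0 < quotientDisc v x :=
    pos_of_mul_pos_right (pos_of_mul_pos_left hR (sq_nonneg _)) (by positivity)
  have hslope : slope v x ≠ 0 := fun h => by simp [h] at hR
  obtain ⟨s, hs0, hs⟩ : ∃ s : ℝ, 0 < s ∧ 4 * v * s ^ 2 = quotientDisc v x := by
    refine ⟨√(quotientDisc v x / (4 * v)), Real.sqrt_pos.2 (by positivity), ?_⟩
    rw [Real.sq_sqrt (by positivity)]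
    field_simp
  have hfac : ∀ X, cubic u v X =
      -(u * v ^ 2) * ((X - x) * (X - ((2 - x) / 2 - s)) * (X - ((2 - x) / 2 + s))) := fun X => by
    apply mul_left_cancel₀ hv.ne'
    rw [mul_cubic_eq_mul_quotient hx, quotient_eq_mul hs]
    ring
  rw [slope_eq_quotient, quotient_eq_mul hs] at hslope
  set q := (2 - x) / 2 - s
  set r := (2 - x) / 2 + s
  have hqr : q < r := by linarith
  obtain ⟨hxq, hxr⟩ : x ≠ q ∧ x ≠ r := by
    constructor <;> intro h <;> apply hslope <;> rw [h] <;> ring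
  rcases hxq.lt_or_gt with hxq | hqx
  · exact existsUnique_isStableRoot_of_factor ha hu hv huv hH hxq hqr hfac
  rcases hxr.lt_or_gt with hxr | hrx
  · exact existsUnique_isStableRoot_of_factor ha hu hv huv hH hqx hxr fun X => by rw [hfac]; ring
  · exact existsUnique_isStableRoot_of_factor ha hu hv huv hH hqr hrx fun X => by rw [hfac]; ring

end Kopel

/-- One stable positive equilibrium for Kopel's model with homogeneous adaptive
expectations (b = a). -/
theorem kopel_homogeneous_one_stable_positive_equilibrium
    (a u v : ℝ) (ha : 0 < a) (ha1 : a ≤ 1) (hu : 0 < u) (hv : 0 < v)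
    (h : (1 < u * v ∧
            u ^ 2 * v ^ 2 - 4 * u ^ 2 * v - 4 * u * v ^ 2 + 18 * u * v - 27 < 0 ∧
            0 < a ^ 3 * u ^ 3 * v ^ 3 - 4 * a ^ 3 * u ^ 3 * v ^ 2 - 4 * a ^ 3 * u ^ 2 * v ^ 3 +
              17 * a ^ 3 * u ^ 2 * v ^ 2 + 4 * a ^ 3 * u ^ 2 * v + 4 * a ^ 3 * u * v ^ 2 -
              2 * a ^ 2 * u ^ 2 * v ^ 2 - 45 * a ^ 3 * u * v + 8 * a ^ 2 * u ^ 2 * v +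
              8 * a ^ 2 * u * v ^ 2 - 36 * a ^ 2 * u * v + 27 * a ^ 3 - 4 * a * u * v +
              54 * a ^ 2 + 36 * a + 8) ∨
         (1 < u * v ∧
            0 < u ^ 2 * v ^ 2 - 4 * u ^ 2 * v - 4 * u * v ^ 2 + 18 * u * v - 27 ∧
            a ^ 3 * u ^ 3 * v ^ 3 - 4 * a ^ 3 * u ^ 3 * v ^ 2 - 4 * a ^ 3 * u ^ 2 * v ^ 3 +
              17 * a ^ 3 * u ^ 2 * v ^ 2 + 4 * a ^ 3 * u ^ 2 * v + 4 * a ^ 3 * u * v ^ 2 -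
              2 * a ^ 2 * u ^ 2 * v ^ 2 - 45 * a ^ 3 * u * v + 8 * a ^ 2 * u ^ 2 * v +
              8 * a ^ 2 * u * v ^ 2 - 36 * a ^ 2 * u * v + 27 * a ^ 3 - 4 * a * u * v +
              54 * a ^ 2 + 36 * a + 8 < 0)) :
    {p : ℝ × ℝ | 0 < p.1 ∧ 0 < p.2 ∧
      p.1 = u * p.2 * (1 - p.2) ∧ p.2 = v * p.1 * (1 - p.1) ∧
      ∀ l : ℂ,
        l ^ 2 - ((2 - 2 * a : ℝ) : ℂ) * l +
          (((1 - a) ^ 2 - u * v * a ^ 2 * (1 - 2 * p.1) * (1 - 2 * p.2) : ℝ) : ℂ) = 0 →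
        ‖l‖ < 1}.encard = 1 := by
  obtain ⟨ρ, hρ, hunique⟩ : ∃! x, Kopel.IsStableRoot a u v x := by
    rcases h with ⟨huv, hR, hH⟩ | ⟨huv, hR, hH⟩
    · exact Kopel.existsUnique_isStableRoot_of_R1_neg hu hv huv hR hH
    · exact Kopel.existsUnique_isStableRoot_of_R1_pos ha hu hv huv hR hH
  refine Set.encard_eq_one.2 ⟨(ρ, v * ρ * (1 - ρ)), Set.eq_singleton_iff_unique_mem.2 ⟨?_, ?_⟩⟩
  · exact (Kopel.stableEquilibrium_iff ha ha1 hu hv).2 ⟨hρ, rfl⟩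
  · rintro ⟨x, y⟩ hxy
    obtain ⟨hx, rfl⟩ := (Kopel.stableEquilibrium_iff (x := x) (y := y) ha ha1 hu hv).1 hxy
    rw [hunique x hx]
end
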